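/- arXiv:1510.03461 — 3 statements merged into one kernel-verified Lean document; each statement's English description precedes it below -/
import Mathlib

section
/- Let p, r be positive integers with p ≥ r+1. Let F be an r-graph with at most p vertices, and let G be an r-graph containing no member of ℋ^F_p. Let u, v be two nonadjacent vertices of G (i.e. no edge of G contains both), and let G' be obtained from G by symmetrizing v to u. Then G' also contains no member of ℋ^F_p. -/
open Finset
open scoped BigOperators Classical

abbrev HG := Finset (Finset ℕ)

/-- The vertex set of a hypergraph: union of its edges. -/
def hverts (G : HG) : Finset ℕ := G.sup id

/-- `G` is `r`-uniform: every edge has `r` vertices. -/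
def Uniform (r : ℕ) (G : HG) : Prop := ∀ e ∈ G, e.card = r

/-- The pair `{u,v}` is covered in `G`: some edge contains both. -/
def Covered (G : HG) (u v : ℕ) : Prop := ∃ e ∈ G, u ∈ e ∧ v ∈ e

/-- `G` contains a copy of `F`. -/
def IsCopyIn (F G : HG) : Prop :=
  ∃ φ : ℕ → ℕ, Set.InjOn φ (hverts F : Set ℕ) ∧ ∀ e ∈ F, e.image φ ∈ G

/-- The subgraph of `G` induced by `C`. -/
def induced (G : HG) (C : Finset ℕ) : HG := G.filter (fun e => e ⊆ C)

/-- `G` contains a member of the family `ℋ^F_p`: there is a core `C` of `p`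
vertices such that the subgraph induced by `C` contains a copy of `F` and every
pair of vertices of `C` is covered in `G`. -/
def ContainsHFam (F : HG) (p : ℕ) (G : HG) : Prop :=
  ∃ C : Finset ℕ, C.card = p ∧ IsCopyIn F (induced G C) ∧
    ∀ u ∈ C, ∀ v ∈ C, u ≠ v → Covered G u v

/-- Turán number: maximum number of edges of an `r`-graph on vertex set `[n]`
satisfying the "freeness" predicate `P`. -/
noncomputable def exNum (r n : ℕ) (P : HG → Prop) : ℕ :=
  sSup {m : ℕ | ∃ G : HG, Uniform r G ∧ (∀ e ∈ G, e ⊆ Finset.range n) ∧ P G ∧ G.card = m}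

/-- The Lagrangian polynomial `p_G(x) = r! ∑_{e∈G} ∏_{i∈e} x_i`. -/
noncomputable def pPoly (r : ℕ) (G : HG) (x : ℕ → ℝ) : ℝ :=
  (r.factorial : ℝ) * ∑ e ∈ G, ∏ i ∈ e, x i

/-- The Lagrangian `λ(G)`. -/
noncomputable def lagrangian (r : ℕ) (G : HG) : ℝ :=
  sSup {v : ℝ | ∃ x : ℕ → ℝ, (∀ i, 0 ≤ x i) ∧ (∑ i ∈ hverts G, x i) = 1 ∧ v = pPoly r G x}

/-- The Lagrangian density `π_λ(F)`. -/
noncomputable def piLambda (r : ℕ) (F : HG) : ℝ :=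
  sSup {v : ℝ | ∃ G : HG, Uniform r G ∧ ¬ IsCopyIn F G ∧ v = lagrangian r G}

/-- `G` is `m`-partite. -/
def MPartite (m : ℕ) (G : HG) : Prop :=
  ∃ f : ℕ → Fin m, ∀ e ∈ G, ∀ u ∈ e, ∀ v ∈ e, u ≠ v → f u ≠ f v

/-- `ℋ^F_{m+1}` is `m`-stable. -/
def MStable (r m : ℕ) (F : HG) : Prop :=
  ∀ ε : ℝ, 0 < ε → ∃ δ : ℝ, 0 < δ ∧ ∃ n₁ : ℕ, ∀ n : ℕ, n₁ ≤ n →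
    ∀ G : HG, Uniform r G → (∀ e ∈ G, e ⊆ Finset.range n) →
      ¬ ContainsHFam F (m + 1) G →
      ((m.descFactorial r : ℝ) / (m : ℝ) ^ r - δ) * (n.choose r : ℝ) < (G.card : ℝ) →
      ∃ Z : Finset ℕ, (Z.card : ℝ) ≤ ε * n ∧
        MPartite m (G.filter (fun e => Disjoint e Z))

/-- Pairs of vertices of `C` not covered in `F`. -/
def uncovPairs (F : HG) (C : Finset ℕ) : Finset (Finset ℕ) :=
  (C.powersetCard 2).filter (fun s => ¬ ∃ e ∈ F, s ⊆ e)

/-- `H` is an expanded `p`-clique with an embedded `F` (i.e. a copy of `H^F_p`). -/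
def IsExpandedClique (r : ℕ) (F : HG) (p : ℕ) (H : HG) : Prop :=
  ∃ C : Finset ℕ, hverts F ⊆ C ∧ C.card = p ∧
    ∃ B : Finset ℕ → Finset ℕ,
      (∀ s ∈ uncovPairs F C, (B s).card = r - 2 ∧ Disjoint (B s) C) ∧
      (∀ s ∈ uncovPairs F C, ∀ t ∈ uncovPairs F C, s ≠ t → Disjoint (B s) (B t)) ∧
      H = F ∪ (uncovPairs F C).image (fun s => s ∪ B s)

/-- The balanced complete `m`-partite `r`-graph `T_r(n,m)` on vertex set `[n]`,
with parts the residue classes modulo `m`. -/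
def turanGraph (r n m : ℕ) : HG :=
  ((Finset.range n).powersetCard r).filter
    (fun e => ∀ u ∈ e, ∀ v ∈ e, u ≠ v → u % m ≠ v % m)

/-- `F` has a vertex of degree 1. -/
def HasDeg1Vertex (F : HG) : Prop :=
  ∃ v ∈ hverts F, (F.filter (fun e => v ∈ e)).card = 1

/-- `T` is a tree on `k` vertices (a connected 2-graph with `k-1` edges). -/
def IsTreeGraph (T : HG) (k : ℕ) : Prop :=
  Uniform 2 T ∧ (hverts T).card = k ∧ T.card + 1 = k ∧
    ∀ u ∈ hverts T, ∀ v ∈ hverts T,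
      Relation.ReflTransGen (fun a b => ({a, b} : Finset ℕ) ∈ T) u v

/-- The `k`-vertex tree `T` satisfies the Erdős–Sós conjecture:
`ex(n,T) ≤ n(k-2)/2` for all `n`. -/
def SatisfiesES (T : HG) (k : ℕ) : Prop :=
  ∀ n : ℕ, 2 * exNum 2 n (fun G => ¬ IsCopyIn T G) ≤ n * (k - 2)

/-- The function `f_r(x) = (∏_{i=1}^{r-1} (x+i-2)) / (x+r-3)^r`. -/
noncomputable def frf (r : ℕ) (x : ℝ) : ℝ :=
  (∏ i ∈ Finset.Icc 1 (r - 1), (x + (i : ℝ) - 2)) / (x + (r : ℝ) - 3) ^ r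

/-- `M` is the rightmost maximum of `f_r` on `[2,∞)`. -/
def IsRightmostMax (r : ℕ) (M : ℝ) : Prop :=
  2 ≤ M ∧ (∀ y : ℝ, 2 ≤ y → frf r y ≤ frf r M) ∧
    (∀ y : ℝ, 2 ≤ y → frf r y = frf r M → y ≤ M)

/-- `F` is the `(r-2)`-fold enlargement of the 2-graph `T`. -/
def IsEnlargement (r : ℕ) (T F : HG) : Prop :=
  ∃ D : Finset ℕ, D.card = r - 2 ∧ Disjoint D (hverts T) ∧ F = T.image (fun e => e ∪ D)

/-- The link of a vertex `i` in `G`. -/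
def link (G : HG) (i : ℕ) : HG := (G.filter (fun e => i ∈ e)).image (fun e => e.erase i)

/-- `λ_i = ∂p_G(x)/∂x_i = r! ∑_{f ∈ L_G(i)} ∏_{j∈f} x_j`. -/
noncomputable def lamI (r : ℕ) (G : HG) (x : ℕ → ℝ) (i : ℕ) : ℝ :=
  (r.factorial : ℝ) * ∑ f ∈ link G i, ∏ j ∈ f, x j

/-- `G` is a blowup of `L`. -/
def IsBlowup (L G : HG) : Prop :=
  ∃ V : ℕ → Finset ℕ,
    (∀ i ∈ hverts L, ∀ j ∈ hverts L, i ≠ j → Disjoint (V i) (V j)) ∧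
    ∀ e : Finset ℕ, e ∈ G ↔ ∃ f ∈ L, ∃ φ : ℕ → ℕ, (∀ i ∈ f, φ i ∈ V i) ∧ e = f.image φ

/-- `G` contains an `s`-sunflower with kernel `D`. -/
def HasSunflower (G : HG) (D : Finset ℕ) (s : ℕ) : Prop :=
  ∃ S : Finset (Finset ℕ), S ⊆ G ∧ S.card = s ∧ (∀ A ∈ S, D ⊆ A) ∧
    ∀ A ∈ S, ∀ B ∈ S, A ≠ B → A ∩ B = D

/-- `F` covers pairs: every pair of vertices of `F` lies in some edge. -/
def CoversPairs (F : HG) : Prop :=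
  ∀ u ∈ hverts F, ∀ v ∈ hverts F, u ≠ v → Covered F u v

/-- `d(G)`: the maximum average degree among nonempty subgraphs of `G`. -/
noncomputable def maxAvgDeg (G : HG) : ℝ :=
  sSup {v : ℝ | ∃ H : HG, H ⊆ G ∧ H.Nonempty ∧ v = 2 * (H.card : ℝ) / ((hverts H).card : ℝ)}

/-- Symmetrizing `v` to `u`: remove all edges containing `v` and replace them
with `{D ∪ {v} : D ∈ L_G(u)}`. -/
def symmetrize (G : HG) (u v : ℕ) : HG :=
  G.filter (fun e => v ∉ e) ∪ (G.filter (fun e => u ∈ e)).image (fun e => insert v (e.erase u))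

/-- The noncomplete transversals of an `m`-partite `r`-graph `L` with parts `A`. -/
noncomputable def noncompTrans (r m : ℕ) (L : HG) (A : Fin m → Finset ℕ) : Finset (Finset ℕ) :=
  ((Finset.univ.biUnion A).powerset).filter
    (fun S => (∀ i, (S ∩ A i).card = 1) ∧ ∃ e : Finset ℕ, e ⊆ S ∧ e.card = r ∧ e ∉ L)

/-!
Let `τ` be the map sending `v` to `u` and fixing every other vertex. Since no edge of `G` contains
both `u` and `v`, `τ` maps every edge of the symmetrized graph `G'` onto an edge of `G`: the old edges
avoid `v`, and `D ∪ {v}` goes back to `D ∪ {u}`. An edge-preserving map carries a member of `ℋ^F_p`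
in `G'` with core `C` to one in `G` with core `τ(C)` as soon as it is injective on `C`, which `τ` is
unless `u` and `v` are distinct vertices of `C`. But then the pair `{u, v}` would be covered in `G'`,
and no edge of `G'` contains both.
-/

lemma mem_hverts {G : HG} {x : ℕ} : x ∈ hverts G ↔ ∃ e ∈ G, x ∈ e := by
  simp [hverts]

lemma mem_symmetrize {G : HG} {u v : ℕ} {e : Finset ℕ} :
    e ∈ symmetrize G u v ↔ (e ∈ G ∧ v ∉ e) ∨ ∃ d ∈ G, u ∈ d ∧ insert v (d.erase u) = e := by
  simp [symmetrize, and_assoc]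

lemma not_covered_symmetrize {G : HG} {u v : ℕ} (huv : u ≠ v) :
    ¬ Covered (symmetrize G u v) u v := by
  rintro ⟨e, he, hue, hve⟩
  rcases mem_symmetrize.1 he with ⟨-, hve'⟩ | ⟨d, -, -, rfl⟩
  · exact hve' hve
  · simp [huv] at hue

lemma image_update_mem_of_mem_symmetrize {G : HG} {u v : ℕ} (hnonadj : ¬ Covered G u v)
    {e : Finset ℕ} (he : e ∈ symmetrize G u v) : e.image (Function.update id v u) ∈ G := by
  have image_eq_self (s : Finset ℕ) (hs : v ∉ s) : s.image (Function.update id v u) = s := by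
    conv_rhs => rw [← s.image_id]
    exact image_congr fun x hx => Function.update_of_ne (ne_of_mem_of_not_mem hx hs) _ _
  rcases mem_symmetrize.1 he with ⟨heG, hve⟩ | ⟨d, hdG, hud, rfl⟩
  · rwa [image_eq_self e hve]
  · have hvd : v ∉ d := fun hvd => hnonadj ⟨d, hdG, hud, hvd⟩
    rwa [image_insert, Function.update_self, image_eq_self _ fun h => hvd (mem_of_mem_erase h),
      insert_erase hud]

lemma injOn_update_id {u v : ℕ} {C : Finset ℕ} (h : u ∈ C → v ∈ C → u = v) :
    Set.InjOn (Function.update id v u) C := by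
  intro a ha b hb hab
  by_cases hav : a = v <;> by_cases hbv : b = v <;> simp_all

lemma Covered.image {H G : HG} {f : ℕ → ℕ} (hf : ∀ e ∈ H, e.image f ∈ G) {a b : ℕ}
    (h : Covered H a b) : Covered G (f a) (f b) := by
  obtain ⟨e, he, hae, hbe⟩ := h
  exact ⟨_, hf e he, mem_image_of_mem f hae, mem_image_of_mem f hbe⟩

lemma IsCopyIn.induced_image {F H G : HG} {C : Finset ℕ} {f : ℕ → ℕ}
    (hf : ∀ e ∈ H, e.image f ∈ G) (hinj : Set.InjOn f C) (hcopy : IsCopyIn F (induced H C)) :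
    IsCopyIn F (induced G (C.image f)) := by
  obtain ⟨φ, hφinj, hφ⟩ := hcopy
  have hφC : Set.MapsTo φ (hverts F) C := fun x hx => by
    obtain ⟨e, heF, hxe⟩ := mem_hverts.1 hx
    exact (mem_filter.1 (hφ e heF)).2 (mem_image_of_mem φ hxe)
  refine ⟨f ∘ φ, hinj.comp hφinj hφC, fun e heF => ?_⟩
  obtain ⟨heH, heC⟩ := mem_filter.1 (hφ e heF)
  rw [← image_image]
  exact mem_filter.2 ⟨hf _ heH, image_subset_image heC⟩

lemma containsHFam_of_injOn_core {F H G : HG} {p : ℕ} {f : ℕ → ℕ} (hf : ∀ e ∈ H, e.image f ∈ G)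
    {C : Finset ℕ} (hinj : Set.InjOn f C) (hC : C.card = p) (hcopy : IsCopyIn F (induced H C))
    (hcov : ∀ a ∈ C, ∀ b ∈ C, a ≠ b → Covered H a b) : ContainsHFam F p G := by
  refine ⟨C.image f, (card_image_of_injOn hinj).trans hC, hcopy.induced_image hf hinj, ?_⟩
  simp only [mem_image]
  rintro _ ⟨a, ha, rfl⟩ _ ⟨b, hb, rfl⟩ hab
  exact (hcov a ha b hb (ne_of_apply_ne f hab)).image hf

theorem stmt_0_general (p : ℕ) (F : HG) (G : HG) (hGfree : ¬ ContainsHFam F p G)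
    (u v : ℕ) (hnonadj : ¬ Covered G u v) :
    ¬ ContainsHFam F p (symmetrize G u v) := by
  rintro ⟨C, hC, hcopy, hcov⟩
  by_cases huvC : u ∈ C ∧ v ∈ C ∧ u ≠ v
  · obtain ⟨hu, hv, huv⟩ := huvC
    exact not_covered_symmetrize huv (hcov u hu v hv huv)
  · refine hGfree (containsHFam_of_injOn_core
      (fun _ => image_update_mem_of_mem_symmetrize hnonadj) (injOn_update_id ?_) hC hcopy hcov)
    tauto

/-- Symmetrization preserves `ℋ^F_p`-freeness. -/
theorem stmt_0 (p r : ℕ) (hr : 0 < r) (hp : r + 1 ≤ p)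
    (F : HG) (hF : Uniform r F) (hFn : (hverts F).card ≤ p)
    (G : HG) (hG : Uniform r G) (hGfree : ¬ ContainsHFam F p G)
    (u v : ℕ) (huv : u ≠ v) (hnonadj : ¬ Covered G u v) :
    ¬ ContainsHFam F p (symmetrize G u v) :=
  stmt_0_general p F G hGfree u v hnonadj
end

section
/- If F is an r-graph that covers pairs (every pair of its vertices lies in some edge), then the Turán density of F equals its Lagrangian density: π(F) = π_λ(F). -/
open Finset
open scoped BigOperators Classical

/-!
Uniform weights on the vertex set of an `F`-free `r`-graph `G ⊆ [n]^(r)` show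
`r! |G| / n^r ≤ λ(G) ≤ π_λ(F)`, so `ex(n, F) ≤ π_λ(F) n^r / r!`. Conversely, given an `F`-free `G`
and weights `x`, blow up each vertex `v` of `G` into `⌊x_v n⌋` vertices. As every pair of vertices
of `F` lies in an edge, a copy of `F` in the blow-up meets each part at most once and projects to a
copy of `F` in `G`; so the blow-up is `F`-free, and it has `(p_G(x) + o(1)) n^r / r!` edges.
It remains to use `C(n, r) ~ n^r / r!`.
-/

open Filter Topology Asymptotics

lemma subset_hverts {G : HG} {e : Finset ℕ} (he : e ∈ G) : e ⊆ hverts G :=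
  le_sup (f := id) he

lemma exists_lt_of_lt_sSup_of_nonneg {s : Set ℝ} {a : ℝ} (ha : 0 ≤ a) (h : a < sSup s) :
    ∃ b ∈ s, a < b :=
  exists_lt_of_lt_csSup (Set.nonempty_iff_ne_empty.2 fun hs => by
    rw [hs, Real.sSup_empty] at h
    linarith) h

section exNum

variable {r n : ℕ} {P : HG → Prop}

lemma exNum_set_bddAbove :
    BddAbove {m : ℕ | ∃ G : HG, Uniform r G ∧ (∀ e ∈ G, e ⊆ range n) ∧ P G ∧ G.card = m} := by
  refine ⟨n.choose r, ?_⟩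
  rintro m ⟨G, hu, hsub, -, rfl⟩
  calc G.card ≤ ((range n).powersetCard r).card :=
        card_le_card fun e he => mem_powersetCard.2 ⟨hsub e he, hu e he⟩
    _ = n.choose r := by rw [card_powersetCard, card_range]

lemma card_le_exNum {G : HG} (hu : Uniform r G) (hsub : ∀ e ∈ G, e ⊆ range n) (hP : P G) :
    G.card ≤ exNum r n P :=
  le_csSup exNum_set_bddAbove ⟨G, hu, hsub, hP, rfl⟩

lemma exNum_le {b : ℝ} (hb : 0 ≤ b)
    (h : ∀ G : HG, Uniform r G → (∀ e ∈ G, e ⊆ range n) → P G → (G.card : ℝ) ≤ b) :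
    (exNum r n P : ℝ) ≤ b := by
  refine (Nat.cast_le.2 (csSup_le' ?_)).trans (Nat.floor_le hb)
  rintro m ⟨G, hu, hsub, hP, rfl⟩
  exact Nat.le_floor (h G hu hsub hP)

end exNum

section Lagrangian

variable {r : ℕ} {G : HG} {x : ℕ → ℝ}

lemma pPoly_nonneg (hx : ∀ i, 0 ≤ x i) : 0 ≤ pPoly r G x :=
  mul_nonneg (Nat.cast_nonneg _) (sum_nonneg fun _ _ => prod_nonneg fun i _ => hx i)

/-- Each edge is a term of `∏ i ∈ V(G), (1 + x i) ≤ exp (∑ i ∈ V(G), x i)`. -/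
lemma pPoly_le_factorial_mul_exp (hx : ∀ i, 0 ≤ x i) (hs : ∑ i ∈ hverts G, x i = 1) :
    pPoly r G x ≤ r.factorial * Real.exp 1 := by
  refine mul_le_mul_of_nonneg_left ?_ (Nat.cast_nonneg _)
  calc ∑ e ∈ G, ∏ i ∈ e, x i ≤ ∑ t ∈ (hverts G).powerset, ∏ i ∈ t, x i :=
        sum_le_sum_of_subset_of_nonneg (fun e he => mem_powerset.2 (subset_hverts he))
          fun t _ _ => prod_nonneg fun i _ => hx i
    _ = ∏ i ∈ hverts G, (x i + 1) := by simp [prod_add]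
    _ ≤ ∏ i ∈ hverts G, Real.exp (x i) :=
        prod_le_prod (fun i _ => by linarith [hx i]) fun i _ => Real.add_one_le_exp (x i)
    _ = Real.exp 1 := by rw [← Real.exp_sum, hs]

lemma pPoly_le_lagrangian (hx : ∀ i, 0 ≤ x i) (hs : ∑ i ∈ hverts G, x i = 1) :
    pPoly r G x ≤ lagrangian r G :=
  le_csSup ⟨_, by rintro v ⟨y, hy, hys, rfl⟩; exact pPoly_le_factorial_mul_exp hy hys⟩
    ⟨x, hx, hs, rfl⟩

lemma lagrangian_nonneg : 0 ≤ lagrangian r G :=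
  Real.sSup_nonneg <| by rintro v ⟨y, hy, -, rfl⟩; exact pPoly_nonneg hy

lemma lagrangian_le_factorial_mul_exp : lagrangian r G ≤ r.factorial * Real.exp 1 :=
  Real.sSup_le (by rintro v ⟨y, hy, hys, rfl⟩; exact pPoly_le_factorial_mul_exp hy hys)
    (by positivity)

/-- Witnessed by the uniform weights on `hverts G`. -/
lemma card_mul_factorial_le_lagrangian_mul_pow (hr : 0 < r) (hG : Uniform r G) :
    (G.card : ℝ) * r.factorial ≤ lagrangian r G * ((hverts G).card : ℝ) ^ r := by
  set k := (hverts G).card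
  rcases Nat.eq_zero_or_pos k with hk | hk
  · have : G = ∅ := eq_empty_of_forall_notMem fun e he => by
      have := card_le_card (subset_hverts he)
      rw [hG e he] at this
      omega
    simp [this, hk, zero_pow hr.ne']
  set x : ℕ → ℝ := fun i => if i ∈ hverts G then (k : ℝ)⁻¹ else 0
  have hx : ∀ i, 0 ≤ x i := fun i => by positivity
  have hs : ∑ i ∈ hverts G, x i = 1 := by
    rw [sum_ite_of_true fun i hi => hi, sum_const, nsmul_eq_mul]
    field_simp
    rfl
  have hp : pPoly r G x = G.card * r.factorial / (k : ℝ) ^ r := by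
    have : ∀ e ∈ G, ∏ i ∈ e, x i = ((k : ℝ)⁻¹) ^ r := fun e he => by
      rw [prod_congr rfl fun i hi => if_pos (subset_hverts he hi), prod_const, hG e he]
    rw [pPoly, sum_congr rfl this, sum_const, nsmul_eq_mul, inv_pow]
    ring
  rw [← div_le_iff₀ (by positivity), ← hp]
  exact pPoly_le_lagrangian hx hs

end Lagrangian

section piLambda

variable {r : ℕ} {F : HG}

lemma piLambda_nonneg : 0 ≤ piLambda r F :=
  Real.sSup_nonneg <| by rintro v ⟨G, -, -, rfl⟩; exact lagrangian_nonneg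

lemma lagrangian_le_piLambda {G : HG} (hu : Uniform r G) (hfree : ¬ IsCopyIn F G) :
    lagrangian r G ≤ piLambda r F :=
  le_csSup ⟨_, by rintro v ⟨G, -, -, rfl⟩; exact lagrangian_le_factorial_mul_exp⟩
    ⟨G, hu, hfree, rfl⟩

lemma exNum_mul_factorial_le (hr : 0 < r) (n : ℕ) :
    (exNum r n (fun G => ¬ IsCopyIn F G) : ℝ) * r.factorial ≤ piLambda r F * (n : ℝ) ^ r := by
  rw [← le_div_iff₀ (by positivity)]
  refine exNum_le (by have := piLambda_nonneg (r := r) (F := F); positivity) ?_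
  intro G hu hsub hfree
  rw [le_div_iff₀ (by positivity)]
  have hk : (hverts G).card ≤ n := by
    simpa [hverts] using card_le_card (Finset.sup_le (f := id) hsub)
  calc (G.card : ℝ) * r.factorial ≤ lagrangian r G * ((hverts G).card : ℝ) ^ r :=
        card_mul_factorial_le_lagrangian_mul_pow hr hu
    _ ≤ piLambda r F * (n : ℝ) ^ r := by
        gcongr
        · exact piLambda_nonneg
        · exact lagrangian_le_piLambda hu hfree

end piLambda

section Blowup

variable {r n : ℕ} {idx : ℕ → ℕ} {G : HG}

/-- The blow-up of `G` inside `[n]` whose part at a vertex `v` is the fibre of `idx` over `v`. -/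
def blowup (r n : ℕ) (idx : ℕ → ℕ) (G : HG) : HG :=
  ((range n).powersetCard r).filter fun e => e.image idx ∈ G

lemma mem_blowup {e : Finset ℕ} :
    e ∈ blowup r n idx G ↔ (e ⊆ range n ∧ e.card = r) ∧ e.image idx ∈ G := by
  rw [blowup, mem_filter, mem_powersetCard]

lemma injOn_of_mem_blowup (hG : Uniform r G) {e : Finset ℕ} (he : e ∈ blowup r n idx G) :
    Set.InjOn idx e := by
  obtain ⟨⟨-, hcard⟩, himg⟩ := mem_blowup.1 he
  exact injOn_of_card_image_eq (by rw [hG _ himg, hcard])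

lemma not_isCopyIn_blowup {F : HG} (hG : Uniform r G) (hcov : CoversPairs F)
    (hfree : ¬ IsCopyIn F G) : ¬ IsCopyIn F (blowup r n idx G) := by
  rintro ⟨ψ, hψ, hmap⟩
  refine hfree ⟨idx ∘ ψ, fun u hu v hv huv => by_contra fun hne => ?_, fun e he => ?_⟩
  · obtain ⟨f, hf, huf, hvf⟩ := hcov u hu v hv hne
    exact hne <| hψ hu hv <| injOn_of_mem_blowup hG (hmap f hf)
      (mem_image_of_mem ψ huf) (mem_image_of_mem ψ hvf) huv
  · simpa only [image_image] using (mem_blowup.1 (hmap e he)).2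

/-- Choosing one element from each fibre over `e` gives an `r`-set mapped onto `e`. -/
lemma prod_card_fiber_le_card_filter {e : Finset ℕ} (he : e.card = r) :
    ∏ v ∈ e, ((range n).filter fun a => idx a = v).card ≤
      (((range n).powersetCard r).filter fun e' => e'.image idx = e).card := by
  rw [← prod_coe_sort e, ← Fintype.card_piFinset]
  refine card_le_card_of_injOn (fun g => univ.image g) (fun g hg => ?_) fun g₁ hg₁ g₂ hg₂ h => ?_
  · simp only [mem_coe, Fintype.mem_piFinset, mem_filter, mem_range] at hg ⊢
    have hidx (v : e) : idx (g v) = v := (hg v).2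
    have hinj : Function.Injective g := fun v w hvw =>
      Subtype.ext (by rw [← hidx v, ← hidx w, hvw])
    refine ⟨mem_powersetCard.2 ⟨fun a ha => ?_, ?_⟩, ?_⟩
    · obtain ⟨v, -, rfl⟩ := mem_image.1 ha
      exact mem_range.2 (hg v).1
    · rw [card_image_of_injective _ hinj, card_univ, Fintype.card_coe, he]
    · ext a
      simp [hidx]
  · simp only [mem_coe, Fintype.mem_piFinset, mem_filter] at hg₁ hg₂ h
    funext v
    obtain ⟨w, -, hw⟩ := mem_image.1 (h ▸ mem_image_of_mem g₁ (mem_univ v))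
    have hwv : w = v := Subtype.ext (by rw [← (hg₂ w).2, hw, (hg₁ v).2])
    rw [← hw, hwv]

lemma sum_prod_card_fiber_le_card_blowup (hG : Uniform r G) :
    ∑ e ∈ G, ∏ v ∈ e, ((range n).filter fun a => idx a = v).card ≤
      (blowup r n idx G).card := by
  rw [card_eq_sum_card_fiberwise fun e he => (mem_blowup.1 he).2]
  refine sum_le_sum fun e he => (prod_card_fiber_le_card_filter (hG e he)).trans_eq ?_
  rw [blowup, filter_filter]
  exact congrArg card (filter_congr fun e' _ => ⟨fun h => ⟨h ▸ he, h⟩, And.right⟩)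

end Blowup

/-- Consecutive blocks of `[n]` of sizes `m v` form the fibres. -/
lemma exists_le_card_fiber (s : Finset ℕ) (m : ℕ → ℕ) {n : ℕ} (hm : ∑ v ∈ s, m v ≤ n) :
    ∃ idx : ℕ → ℕ, ∀ v ∈ s, m v ≤ ((range n).filter fun a => idx a = v).card := by
  induction s using Finset.induction_on generalizing n with
  | empty => exact ⟨id, by simp⟩
  | insert v s hv ih =>
    rw [sum_insert hv] at hm
    obtain ⟨idx, hidx⟩ := ih (n := n - m v) (by omega)
    refine ⟨fun a => if a < n - m v then idx a else v, fun w hw => ?_⟩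
    rcases mem_insert.1 hw with rfl | hw
    · calc m w = (Ico (n - m w) n).card := by rw [Nat.card_Ico]; omega
        _ ≤ _ := card_le_card fun a ha => by
          simp only [mem_Ico] at ha
          simp [ha.2, not_lt.2 ha.1]
    · refine (hidx w hw).trans (card_le_card fun a ha => ?_)
      simp only [mem_filter, mem_range] at ha ⊢
      exact ⟨by omega, by simp [ha.1, ha.2]⟩

section Density

variable {r : ℕ} {F G : HG}

lemma sum_prod_le_exNum (hG : Uniform r G) (hcov : CoversPairs F) (hfree : ¬ IsCopyIn F G)
    (m : ℕ → ℕ) {n : ℕ} (hm : ∑ v ∈ hverts G, m v ≤ n) :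
    ∑ e ∈ G, ∏ v ∈ e, m v ≤ exNum r n (fun G => ¬ IsCopyIn F G) := by
  obtain ⟨idx, hidx⟩ := exists_le_card_fiber (hverts G) m hm
  calc ∑ e ∈ G, ∏ v ∈ e, m v
      ≤ ∑ e ∈ G, ∏ v ∈ e, ((range n).filter fun a => idx a = v).card :=
        sum_le_sum fun e he => prod_le_prod' fun v hv => hidx v (subset_hverts he hv)
    _ ≤ (blowup r n idx G).card := sum_prod_card_fiber_le_card_blowup hG
    _ ≤ _ := card_le_exNum (fun e he => (mem_blowup.1 he).1.2)
        (fun e he => (mem_blowup.1 he).1.1) (not_isCopyIn_blowup hG hcov hfree)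

/-- Blowing up `G` with parts of sizes `⌊x v * n⌋`. -/
lemma pPoly_floor_le (hG : Uniform r G) (hcov : CoversPairs F) (hfree : ¬ IsCopyIn F G)
    {x : ℕ → ℝ} (hx : ∀ i, 0 ≤ x i) (hs : ∑ i ∈ hverts G, x i = 1) (n : ℕ) :
    pPoly r G (fun v => ⌊x v * n⌋₊ / n) ≤
      r.factorial * (exNum r n (fun G => ¬ IsCopyIn F G) : ℝ) / (n : ℝ) ^ r := by
  have hm : ∑ v ∈ hverts G, ⌊x v * n⌋₊ ≤ n := by
    have : ∑ v ∈ hverts G, (⌊x v * n⌋₊ : ℝ) ≤ n :=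
      calc ∑ v ∈ hverts G, (⌊x v * n⌋₊ : ℝ) ≤ ∑ v ∈ hverts G, x v * n :=
            sum_le_sum fun v _ => Nat.floor_le (by have := hx v; positivity)
        _ = n := by rw [← sum_mul, hs, one_mul]
    exact_mod_cast this
  have hle : (∑ e ∈ G, ∏ v ∈ e, (⌊x v * n⌋₊ : ℝ)) ≤ exNum r n (fun G => ¬ IsCopyIn F G) := by
    exact_mod_cast sum_prod_le_exNum hG hcov hfree _ hm
  have hp : pPoly r G (fun v => ⌊x v * n⌋₊ / n) =
      r.factorial * (∑ e ∈ G, ∏ v ∈ e, (⌊x v * n⌋₊ : ℝ)) / (n : ℝ) ^ r := by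
    rw [pPoly, mul_div_assoc, sum_div]
    exact congrArg _ (sum_congr rfl fun e he => by rw [prod_div_distrib, prod_const, hG e he])
  rw [hp]
  gcongr

lemma continuous_pPoly : Continuous (pPoly r G) := by
  unfold pPoly
  fun_prop

lemma tendsto_pPoly_floor {x : ℕ → ℝ} (hx : ∀ i, 0 ≤ x i) :
    Tendsto (fun n : ℕ => pPoly r G (fun v => ⌊x v * n⌋₊ / n)) atTop (𝓝 (pPoly r G x)) :=
  (continuous_pPoly.tendsto x).comp <| tendsto_pi_nhds.2 fun v =>
    (tendsto_nat_floor_mul_div_atTop (hx v)).comp tendsto_natCast_atTop_atTop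

lemma tendsto_factorial_mul_exNum_div_pow (hr : 0 < r) (hcov : CoversPairs F) :
    Tendsto (fun n : ℕ => r.factorial * (exNum r n (fun G => ¬ IsCopyIn F G) : ℝ) / (n : ℝ) ^ r)
      atTop (𝓝 (piLambda r F)) := by
  refine tendsto_order.2 ⟨fun a ha => ?_, fun a ha => .of_forall fun n => ?_⟩
  · rcases lt_or_ge a 0 with ha0 | ha0
    · exact .of_forall fun _ => ha0.trans_le (by positivity)
    obtain ⟨_, ⟨G, hG, hfree, rfl⟩, hGa⟩ := exists_lt_of_lt_sSup_of_nonneg ha0 ha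
    obtain ⟨_, ⟨x, hx, hs, rfl⟩, hxa⟩ := exists_lt_of_lt_sSup_of_nonneg ha0 hGa
    filter_upwards [(tendsto_pPoly_floor hx).eventually (lt_mem_nhds hxa)] with n hn
    exact hn.trans_le (pPoly_floor_le hG hcov hfree hx hs n)
  · refine (div_le_of_le_mul₀ (by positivity) piLambda_nonneg ?_).trans_lt ha
    rw [mul_comm]
    exact exNum_mul_factorial_le hr n

end Density

theorem stmt_2_general (r : ℕ) (hr : 0 < r) (F : HG) (hcov : CoversPairs F) :
    Filter.Tendsto
      (fun n => (exNum r n (fun G => ¬ IsCopyIn F G) : ℝ) / (n.choose r : ℝ))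
      Filter.atTop (nhds (piLambda r F)) := by
  refine (IsEquivalent.refl.div (isEquivalent_choose r)).tendsto_nhds_iff.2
    ((tendsto_factorial_mul_exNum_div_pow hr hcov).congr fun n => ?_)
  rw [Pi.div_apply, div_div_eq_mul_div, mul_comm]

/-- If `F` covers pairs then `π(F) = π_λ(F)`. -/
theorem stmt_2 (r : ℕ) (hr : 0 < r) (F : HG) (hF : Uniform r F) (hcov : CoversPairs F) :
    Filter.Tendsto
      (fun n => (exNum r n (fun G => ¬ IsCopyIn F G) : ℝ) / (n.choose r : ℝ))
      Filter.atTop (nhds (piLambda r F)) :=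
  stmt_2_general r hr F hcov
end

section
/- Let G be an r-graph on [n] and let p, d be positive integers with d < r. Then there exists a subgraph G' of G with |G'| ≥ |G| − p·C(n,d)·C(n,r−d−1) such that for every d-set D of vertices, if d_{G'}(D) > 0 then the kernel degree d*_{G'}(D) > p. -/
open Finset
open scoped BigOperators Classical

/-!
If `D` is a `d`-set of kernel degree at most `p`, the sets `e \ D` for the edges `e ⊇ D` form an
`(r - d)`-uniform family with no `p + 1` pairwise disjoint members. Such a family `F` of `k`-sets
on `N` points has at most `p * C(N, k - 1)` members, by Katona's averaging argument run on a line
instead of a circle: in a linear ordering of the points, the intervals of length `k` that belong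
to `F` can be matched greedily from the left, so at most `k * p` of the `N - k + 1` intervals lie
in `F`; averaging over all orderings gives `(N - k + 1) * #F ≤ k * p * C(N, k)`, and
`k * C(N, k) = (N - k + 1) * C(N, k - 1)`.

Deleting, one at a time, all edges through a `d`-set of positive degree but small kernel degree
removes that `d`-set from `positiveDegreeSets d G` at a cost of at most `p * C(n, r - d - 1)` edges.
-/

open scoped Pointwise in
theorem Finset.exists_perm_map_eq_of_card_eq {β : Type*} [Fintype β] [DecidableEq β]
    {A B : Finset β} (h : #A = #B) : ∃ τ : Equiv.Perm β, A.map τ.toEmbedding = B := by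
  have := Set.powersetCard.isPretransitive (α := β) (n := #A)
  obtain ⟨τ, hτ⟩ := MulAction.exists_smul_eq (Equiv.Perm β)
    (⟨A, rfl⟩ : Set.powersetCard β #A) (⟨B, h.symm⟩ : Set.powersetCard β #A)
  have hB : τ • A = B := by simpa using congrArg Subtype.val hτ
  refine ⟨τ, ?_⟩
  rw [← hB, Finset.map_eq_image]
  rfl

theorem card_le_mul_of_pairwiseDisjoint_Ico {k : ℕ} (hk : 0 < k) (s : ℕ) (P : Finset ℕ)
    (hP : ∀ Q ⊆ P, (Q : Set ℕ).PairwiseDisjoint (fun i => Ico i (i + k)) → #Q ≤ s) :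
    #P ≤ k * s := by
  induction s generalizing P with
  | zero =>
    rw [mul_zero, Nat.le_zero, card_eq_zero, eq_empty_iff_forall_notMem]
    intro a ha
    simpa using hP {a} (singleton_subset_iff.2 ha) (by simp)
  | succ s ih =>
    obtain rfl | hne := P.eq_empty_or_nonempty
    · simp
    set a := P.min' hne
    have hfar : #{i ∈ P | a + k ≤ i} ≤ k * s := by
      refine ih _ fun Q hQ hdisj => ?_
      have haQ : a ∉ Q := fun h => by have := (mem_filter.1 (hQ h)).2; omega
      have hins :
          ((insert a Q : Finset ℕ) : Set ℕ).PairwiseDisjoint (fun i => Ico i (i + k)) := by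
        rw [coe_insert]
        refine hdisj.insert fun b hb _ => disjoint_left.2 fun x hxa hxb => ?_
        have := (mem_filter.1 (hQ hb)).2
        simp only [mem_Ico] at hxa hxb
        omega
      have := hP _ (insert_subset (min'_mem P hne) (hQ.trans (filter_subset _ _))) hins
      rw [card_insert_of_notMem haQ] at this
      omega
    have hnear : #{i ∈ P | ¬ a + k ≤ i} ≤ k := by
      calc #{i ∈ P | ¬ a + k ≤ i} ≤ #(Ico a (a + k)) := card_le_card fun i hi => by
              rw [mem_filter] at hi
              have := P.min'_le i hi.1
              rw [mem_Ico]
              omega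
        _ = k := by simp
    rw [← card_filter_add_card_filter_not (fun i => a + k ≤ i), Nat.mul_succ]
    omega

namespace Katona

variable {α : Type*} [Fintype α] [DecidableEq α]

def window (N k i : ℕ) : Finset (Fin N) := {x | (x : ℕ) ∈ Ico i (i + k)}

theorem card_window {N k i : ℕ} (h : i + k ≤ N) : #(window N k i) = k := by
  rw [← card_map Fin.valEmbedding]
  convert Nat.card_Ico i (i + k) using 2
  · ext y
    simp only [window, mem_map, mem_filter, mem_univ, true_and, Fin.valEmbedding_apply, mem_Ico]
    exact ⟨by rintro ⟨x, hx, rfl⟩; exact hx, fun hy => ⟨⟨y, by omega⟩, hy, rfl⟩⟩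
  · omega

theorem disjoint_window {N k i j : ℕ} (h : Disjoint (Ico i (i + k)) (Ico j (j + k))) :
    Disjoint (window N k i) (window N k j) :=
  disjoint_left.2 fun _ hi hj => disjoint_left.1 h (mem_filter.1 hi).2 (mem_filter.1 hj).2

-- An equivalence `Fin (Fintype.card α) ≃ α` is read as a linear ordering of `α`.
def placements (F : Finset (Finset α)) (A : Finset (Fin (Fintype.card α))) : ℕ :=
  #{e : Fin (Fintype.card α) ≃ α | A.map e.toEmbedding ∈ F}

theorem placements_eq_of_card_eq (F : Finset (Finset α)) {A B : Finset (Fin (Fintype.card α))}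
    (h : #A = #B) : placements F A = placements F B := by
  obtain ⟨τ, rfl⟩ := Finset.exists_perm_map_eq_of_card_eq h
  refine card_equiv (τ.equivCongr (Equiv.refl α)) fun e => ?_
  simp only [mem_filter, mem_univ, true_and, map_map]
  congr!
  ext x
  simp

theorem sum_placements (F : Finset (Finset α)) :
    ∑ A, placements F A = (Fintype.card α).factorial * #F := by
  simp only [placements, card_filter]
  rw [sum_comm]
  simp only [← card_filter]
  have hF (e : Fin (Fintype.card α) ≃ α) :
      #{A : Finset (Fin (Fintype.card α)) | A.map e.toEmbedding ∈ F} = #F :=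
    card_equiv e.finsetCongr fun A => by simp
  simp only [hF, sum_const, card_univ, smul_eq_mul,
    Fintype.card_equiv (Fintype.equivFin α).symm, Fintype.card_fin]

theorem choose_mul_placements {k : ℕ} {F : Finset (Finset α)} (hF : ∀ S ∈ F, #S = k)
    {A : Finset (Fin (Fintype.card α))} (hA : #A = k) :
    (Fintype.card α).choose k * placements F A = (Fintype.card α).factorial * #F := by
  rw [← sum_placements, ← sum_subset (subset_univ (powersetCard k univ)),
    sum_const_nat fun B hB => placements_eq_of_card_eq F ((mem_powersetCard.1 hB).2.trans hA.symm),
    card_powersetCard, card_univ, Fintype.card_fin]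
  intro B _ hB
  rw [mem_powersetCard, not_and] at hB
  refine card_eq_zero.2 (filter_eq_empty_iff.2 fun e _ he => hB (subset_univ _) ?_)
  simpa using hF _ he

theorem card_window_mem_le {k s : ℕ} (hk : 0 < k) {F : Finset (Finset α)}
    (hν : ∀ M ⊆ F, (M : Set (Finset α)).PairwiseDisjoint id → #M ≤ s)
    (e : Fin (Fintype.card α) ≃ α) :
    #{i ∈ range (Fintype.card α + 1 - k) | (window _ k i).map e.toEmbedding ∈ F} ≤
      k * s := by
  refine card_le_mul_of_pairwiseDisjoint_Ico hk s _ fun Q hQ hdisj => ?_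
  have hQF : ∀ i ∈ Q, i + k ≤ Fintype.card α ∧ (window _ k i).map e.toEmbedding ∈ F := by
    intro i hi
    obtain ⟨hi, hiF⟩ := mem_filter.1 (hQ hi)
    exact ⟨by rw [mem_range] at hi; omega, hiF⟩
  have hwin : (Q : Set ℕ).PairwiseDisjoint fun i => (window _ k i).map e.toEmbedding :=
    fun i hi j hj hij => (disjoint_map _).2 (disjoint_window (hdisj hi hj hij))
  have hinj : Set.InjOn (fun i => (window _ k i).map e.toEmbedding) Q := by
    intro i hi j hj hij
    by_contra hne
    have hempty : Disjoint ((window _ k i).map e.toEmbedding) ((window _ k j).map e.toEmbedding) :=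
      hwin hi hj hne
    rw [← show (window _ k i).map e.toEmbedding = (window _ k j).map e.toEmbedding from hij,
      disjoint_self, bot_eq_empty, ← card_eq_zero, card_map, card_window (hQF i hi).1] at hempty
    omega
  rw [← card_image_of_injOn hinj]
  refine hν _ (image_subset_iff.2 fun i hi => (hQF i hi).2) ?_
  rwa [coe_image, hinj.pairwiseDisjoint_image]

theorem sum_placements_window_le {k s : ℕ} (hk : 0 < k) {F : Finset (Finset α)}
    (hν : ∀ M ⊆ F, (M : Set (Finset α)).PairwiseDisjoint id → #M ≤ s) :
    ∑ i ∈ range (Fintype.card α + 1 - k), placements F (window _ k i) ≤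
      (Fintype.card α).factorial * (k * s) := by
  simp only [placements, card_filter]
  rw [sum_comm]
  simp only [← card_filter]
  calc _ ≤ ∑ _e : Fin (Fintype.card α) ≃ α, k * s :=
        sum_le_sum fun e _ => card_window_mem_le hk hν e
    _ = _ := by
      rw [sum_const, card_univ, smul_eq_mul, Fintype.card_equiv (Fintype.equivFin α).symm,
        Fintype.card_fin]

end Katona

open Katona in
theorem card_le_mul_choose_pred_of_matching {α : Type*} [Fintype α] [DecidableEq α] {k s : ℕ}
    (hk : 0 < k) {F : Finset (Finset α)} (hF : ∀ S ∈ F, #S = k)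
    (hν : ∀ M ⊆ F, (M : Set (Finset α)).PairwiseDisjoint id → #M ≤ s) :
    #F ≤ s * (Fintype.card α).choose (k - 1) := by
  set N := Fintype.card α
  obtain rfl | ⟨S, hS⟩ := F.eq_empty_or_nonempty
  · simp
  have hkN : k ≤ N := hF S hS ▸ card_le_univ S
  have hcount : (N + 1 - k) * (N.factorial * #F) ≤ N.choose k * (N.factorial * (k * s)) := by
    calc (N + 1 - k) * (N.factorial * #F)
        = ∑ i ∈ range (N + 1 - k), N.choose k * placements F (window N k i) := by
          rw [sum_congr rfl fun i hi => choose_mul_placements hF (card_window (by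
            rw [mem_range] at hi; omega)), sum_const, card_range, smul_eq_mul]
      _ ≤ N.choose k * (N.factorial * (k * s)) := by
          rw [← mul_sum]
          exact Nat.mul_le_mul_left _ (sum_placements_window_le hk hν)
  have hpascal : N.choose k * k = N.choose (k - 1) * (N + 1 - k) := by
    obtain ⟨k, rfl⟩ := Nat.exists_eq_add_of_lt hk
    simpa [show N + 1 - (k + 1) = N - k by omega] using Nat.choose_succ_right_eq N k
  refine Nat.le_of_mul_le_mul_left ?_ (show 0 < N + 1 - k by omega)
  refine Nat.le_of_mul_le_mul_left ?_ N.factorial_pos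
  calc N.factorial * ((N + 1 - k) * #F) = (N + 1 - k) * (N.factorial * #F) := by ring
    _ ≤ N.choose k * (N.factorial * (k * s)) := hcount
    _ = N.factorial * ((N + 1 - k) * (s * N.choose (k - 1))) := by
      rw [show N.choose k * (N.factorial * (k * s)) = N.factorial * s * (N.choose k * k) by ring,
        hpascal]
      ring

theorem card_le_mul_choose_pred_of_matching_of_subset {β : Type*} [DecidableEq β]
    {V : Finset β} {k s : ℕ} (hk : 0 < k) {F : Finset (Finset β)} (hFV : ∀ S ∈ F, S ⊆ V)
    (hF : ∀ S ∈ F, #S = k)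
    (hν : ∀ M ⊆ F, (M : Set (Finset β)).PairwiseDisjoint id → #M ≤ s) :
    #F ≤ s * (#V).choose (k - 1) := by
  set ι : Finset V ↪ Finset β := (mapEmbedding (.subtype (· ∈ V))).toEmbedding
  have hι : ∀ S ∈ F, ι (S.subtype (· ∈ V)) = S := fun S hS =>
    subtype_map_of_mem fun _ hx => hFV S hS hx
  set F' : Finset (Finset V) := F.image fun S => S.subtype (· ∈ V)
  have hF'F : ∀ T ∈ F', ι T ∈ F := by
    simp only [F', mem_image, forall_exists_index, and_imp]
    rintro _ S hS rfl
    rwa [hι S hS]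
  have hcard : #F' = #F := card_image_of_injOn fun S hS S' hS' h => by
    rw [← hι S hS, ← hι S' hS']
    exact congrArg ι h
  rw [← hcard, ← Fintype.card_coe V]
  refine card_le_mul_choose_pred_of_matching hk (fun T hT => ?_) fun M hM hdisj => ?_
  · rw [← hF _ (hF'F T hT)]
    exact (card_map _).symm
  · rw [← card_map ι]
    refine hν _ (fun S hS => ?_) ?_
    · obtain ⟨T, hT, rfl⟩ := mem_map.1 hS
      exact hF'F T (hM hT)
    · rw [coe_map, ι.injective.injOn.pairwiseDisjoint_image]
      exact fun T hT T' hT' hne => (disjoint_map _).2 (hdisj hT hT' hne)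

def positiveDegreeSets (d : ℕ) (H : HG) : Finset (Finset ℕ) := H.biUnion (powersetCard d)

theorem mem_positiveDegreeSets {d : ℕ} {H : HG} {D : Finset ℕ} :
    D ∈ positiveDegreeSets d H ↔ #D = d ∧ ∃ e ∈ H, D ⊆ e := by
  simp only [positiveDegreeSets, mem_biUnion, mem_powersetCard]
  tauto

theorem positiveDegreeSets_mono {d : ℕ} {H₁ H : HG} (h : H₁ ⊆ H) :
    positiveDegreeSets d H₁ ⊆ positiveDegreeSets d H :=
  biUnion_subset_biUnion_of_subset_left _ h

theorem card_positiveDegreeSets_le {d : ℕ} {V : Finset ℕ} {H : HG}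
    (hHV : ∀ e ∈ H, e ⊆ V) :
    #(positiveDegreeSets d H) ≤ (#V).choose d := by
  rw [← card_powersetCard]
  refine card_le_card fun D hD => ?_
  obtain ⟨hD, e, he, hDe⟩ := mem_positiveDegreeSets.1 hD
  exact mem_powersetCard.2 ⟨hDe.trans (hHV e he), hD⟩

theorem hasSunflower_of_pairwiseDisjoint {H : HG} {D : Finset ℕ} {M : Finset (Finset ℕ)}
    (hM : ∀ T ∈ M, Disjoint T D ∧ T ∪ D ∈ H)
    (hdisj : (M : Set (Finset ℕ)).PairwiseDisjoint id) :
    HasSunflower H D #M := by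
  have hinj : Set.InjOn (· ∪ D) M := fun T hT T' hT' h => by
    rw [← union_sdiff_cancel_right (hM T hT).1, ← union_sdiff_cancel_right (hM T' hT').1]
    exact congrArg (· \ D) h
  refine ⟨M.image (· ∪ D), ?_, card_image_of_injOn hinj, ?_, ?_⟩
  · exact image_subset_iff.2 fun T hT => (hM T hT).2
  · simp
  · simp only [mem_image]
    rintro _ ⟨T, hT, rfl⟩ _ ⟨T', hT', rfl⟩ hne
    have hTT' : Disjoint T T' := hdisj hT hT' fun h => hne (h ▸ rfl)
    ext x
    simp only [mem_inter, mem_union]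
    have : x ∈ T → x ∉ T' := fun h => disjoint_left.1 hTT' h
    tauto

theorem card_filter_superset_le_of_not_hasSunflower {r d p : ℕ} (hdr : d < r)
    {V : Finset ℕ} {H : HG} (hH : Uniform r H) (hHV : ∀ e ∈ H, e ⊆ V) {D : Finset ℕ}
    (hD : #D = d) (hsf : ¬ HasSunflower H D (p + 1)) :
    #{e ∈ H | D ⊆ e} ≤ p * (#V).choose (r - d - 1) := by
  have hinj : Set.InjOn (· \ D) ({e ∈ H | D ⊆ e} : Finset (Finset ℕ)) :=
    fun e he e' he' h => by
      rw [mem_coe, mem_filter] at he he'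
      rw [← sdiff_union_of_subset he.2, ← sdiff_union_of_subset he'.2]
      exact congrArg (· ∪ D) h
  rw [← card_image_of_injOn hinj]
  refine card_le_mul_choose_pred_of_matching_of_subset (k := r - d) (by omega) ?_ ?_
    fun M hM hdisj => ?_
  · simp only [forall_mem_image, mem_filter, and_imp]
    exact fun e he _ => sdiff_subset.trans (hHV e he)
  · simp only [forall_mem_image, mem_filter, and_imp]
    exact fun e he hDe => by rw [card_sdiff_of_subset hDe, hH e he, hD]
  · by_contra! hM'
    obtain ⟨M', hM'M, hM'card⟩ := exists_subset_card_eq (show p + 1 ≤ #M from hM')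
    rw [← hM'card] at hsf
    refine hsf (hasSunflower_of_pairwiseDisjoint (fun T hT => ?_) (hdisj.subset hM'M))
    obtain ⟨e, he, rfl⟩ := mem_image.1 (hM (hM'M hT))
    rw [mem_filter] at he
    exact ⟨sdiff_disjoint, by rw [sdiff_union_of_subset he.2]; exact he.1⟩

theorem exists_subset_forall_hasSunflower {r d p : ℕ} (hdr : d < r) {V : Finset ℕ} (H : HG)
    (hH : Uniform r H) (hHV : ∀ e ∈ H, e ⊆ V) :
    ∃ H' ⊆ H, #H ≤ #H' + p * (#V).choose (r - d - 1) * #(positiveDegreeSets d H) ∧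
      ∀ D : Finset ℕ, #D = d → (∃ e ∈ H', D ⊆ e) → HasSunflower H' D (p + 1) := by
  induction H using Finset.strongInduction with
  | H H ih =>
  by_cases hgood :
      ∀ D : Finset ℕ, #D = d → (∃ e ∈ H, D ⊆ e) → HasSunflower H D (p + 1)
  · exact ⟨H, subset_rfl, le_self_add, hgood⟩
  push Not at hgood
  obtain ⟨D, hD, ⟨e, he, hDe⟩, hbad⟩ := hgood
  set H₁ : HG := {e ∈ H | ¬ D ⊆ e}
  have hH₁ : H₁ ⊂ H := filter_ssubset.2 ⟨e, he, not_not.2 hDe⟩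
  obtain ⟨H', hH'H₁, hcount, hsf⟩ := ih H₁ hH₁ (fun e he => hH e (filter_subset _ _ he))
    (fun e he => hHV e (filter_subset _ _ he))
  have hpos : #(positiveDegreeSets d H₁) < #(positiveDegreeSets d H) := by
    refine card_lt_card ((ssubset_iff_of_subset
      (positiveDegreeSets_mono (filter_subset _ _))).2 ⟨D, ?_, ?_⟩)
    · exact mem_positiveDegreeSets.2 ⟨hD, e, he, hDe⟩
    · rw [mem_positiveDegreeSets]
      rintro ⟨-, e', he', hDe'⟩
      exact (mem_filter.1 he').2 hDe'
  have hdel := card_filter_superset_le_of_not_hasSunflower hdr hH hHV hD hbad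
  refine ⟨H', hH'H₁.trans (filter_subset _ _), ?_, hsf⟩
  calc #H = #{e ∈ H | D ⊆ e} + #H₁ := (card_filter_add_card_filter_not _).symm
    _ ≤ #H' + p * (#V).choose (r - d - 1) * (#(positiveDegreeSets d H₁) + 1) := by
      rw [mul_add_one]
      omega
    _ ≤ #H' + p * (#V).choose (r - d - 1) * #(positiveDegreeSets d H) := by
      gcongr
      exact hpos

theorem stmt_10_general (r n p d : ℕ) (hdr : d < r)
    (G : HG) (hG : Uniform r G) (hGn : ∀ e ∈ G, e ⊆ Finset.range n) :
    ∃ G' : HG, G' ⊆ G ∧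
      (G.card : ℝ) - (p : ℝ) * (n.choose d : ℝ) * (n.choose (r - d - 1) : ℝ) ≤ (G'.card : ℝ) ∧
      ∀ D : Finset ℕ, D.card = d → (∃ e ∈ G', D ⊆ e) → HasSunflower G' D (p + 1) := by
  obtain ⟨G', hG'G, hcount, hsf⟩ := exists_subset_forall_hasSunflower (p := p) hdr G hG hGn
  refine ⟨G', hG'G, ?_, hsf⟩
  have hbound : #G ≤ #G' + p * n.choose d * n.choose (r - d - 1) := by
    rw [card_range] at hcount
    calc #G ≤ #G' + p * n.choose (r - d - 1) * #(positiveDegreeSets d G) := hcount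
      _ ≤ #G' + p * n.choose (r - d - 1) * n.choose d := by
        gcongr
        simpa using card_positiveDegreeSets_le hGn
      _ = #G' + p * n.choose d * n.choose (r - d - 1) := by ring
  have : (#G : ℝ) ≤ #G' + p * n.choose d * n.choose (r - d - 1) := by exact_mod_cast hbound
  linarith

/-- Passing to a subgraph in which every `d`-set of positive degree
has kernel degree greater than `p`. -/
theorem stmt_10 (r n p d : ℕ) (hp : 0 < p) (hd : 0 < d) (hdr : d < r)
    (G : HG) (hG : Uniform r G) (hGn : ∀ e ∈ G, e ⊆ Finset.range n) :
    ∃ G' : HG, G' ⊆ G ∧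
      (G.card : ℝ) - (p : ℝ) * (n.choose d : ℝ) * (n.choose (r - d - 1) : ℝ) ≤ (G'.card : ℝ) ∧
      ∀ D : Finset ℕ, D.card = d → (∃ e ∈ G', D ⊆ e) → HasSunflower G' D (p + 1) :=
  stmt_10_general r n p d hdr G hG hGn
end
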